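/- Let U_0 denote either U_{v_0,g_0} or U_{v_0}. There exists a constant C, depending only on Ω, v_0 and the functions F_i but independent of ε ∈ (0,1) and β > 0, such that every minimizer u of J_{ε,β} on U_0 satisfies |J_{ε,β}(u)| ≤ C ε. -/

import Mathlib

open MeasureTheory Real Set Filter RealInnerProductSpace

noncomputable section

/-- Points of the ambient Euclidean space `ℝ^N`. -/
abbrev Pt (N : ℕ) := EuclideanSpace ℝ (Fin N)

/-- Time derivative `∂_t v_i` of the `i`-th component of `v`. -/
def tder {N k : ℕ} (v : Pt N → ℝ → Fin k → ℝ) (i : Fin k) (x : Pt N) (t : ℝ) : ℝ :=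
  deriv (fun s => v x s i) t

/-- Spatial gradient `∇v_i` of the `i`-th component of `v`. -/
def sgrad {N k : ℕ} (v : Pt N → ℝ → Fin k → ℝ) (i : Fin k) (x : Pt N) (t : ℝ) : Pt N :=
  gradient (fun y => v y t i) x

/-- Time derivative of a scalar function of `(x,t)`. -/
def tdS {N : ℕ} (φ : Pt N → ℝ → ℝ) (x : Pt N) (t : ℝ) : ℝ := deriv (φ x) t

/-- Spatial gradient of a scalar function of `(x,t)`. -/
def sgS {N : ℕ} (φ : Pt N → ℝ → ℝ) (x : Pt N) (t : ℝ) : Pt N :=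
  gradient (fun y => φ y t) x

/-- The product (Lebesgue) measure on `Ω × (0,T)`. -/
def μT {N : ℕ} (Ω : Set (Pt N)) (T : ℝ) : Measure (Pt N × ℝ) :=
  (volume.restrict Ω).prod (volume.restrict (Set.Ioo 0 T))

/-- The product (Lebesgue) measure on `Ω × (0,∞)`. -/
def μI {N : ℕ} (Ω : Set (Pt N)) : Measure (Pt N × ℝ) :=
  (volume.restrict Ω).prod (volume.restrict (Set.Ioi 0))

/-- Membership in `U = ∩_{T>0} H¹(Ω×(0,T))^k`: each component, its time derivative and its
spatial gradient are square integrable on `Ω × (0,T)` for every `T > 0`. -/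
def memU {N k : ℕ} (Ω : Set (Pt N)) (v : Pt N → ℝ → Fin k → ℝ) : Prop :=
  ∀ T > 0, ∀ i : Fin k,
    MemLp (fun p : Pt N × ℝ => v p.1 p.2 i) 2 (μT Ω T) ∧
    MemLp (fun p : Pt N × ℝ => tder v i p.1 p.2) 2 (μT Ω T) ∧
    MemLp (fun p : Pt N × ℝ => sgrad v i p.1 p.2) 2 (μT Ω T)

/-- The data of the problem: a bounded domain `Ω ⊂ ℝ^N`, a symmetric interaction matrix `A`
with zero diagonal and positive off-diagonal entries, potentials `F_i` and an initial datum
`v₀ ∈ H¹(Ω)^k` with `0 ≤ v₀ ≤ 1` and segregated components (whose trace on `∂Ω` is `g₀`). -/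
structure Setting (N k : ℕ) where
  Ω : Set (Pt N)
  hk : 2 ≤ k
  hΩopen : IsOpen Ω
  hΩconn : IsConnected Ω
  hΩbdd : Bornology.IsBounded Ω
  A : Fin k → Fin k → ℝ
  hAsymm : ∀ i j, A i j = A j i
  hAdiag : ∀ i, A i i = 0
  hAoff : ∀ i j, i ≠ j → 0 < A i j
  Fc : Fin k → ℝ → ℝ
  hFcont : ∀ i, Continuous (Fc i)
  hFdiff : ∀ i, ∀ s ∈ Set.Ico (0:ℝ) 1, DifferentiableAt ℝ (Fc i) s
  hFnondec : ∀ i, MonotoneOn (Fc i) (Set.Iio (0:ℝ))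
  hFnoninc : ∀ i, AntitoneOn (Fc i) (Set.Ioi (1:ℝ))
  hFderiv0 : ∀ i, deriv (Fc i) 0 = 0
  v0 : Pt N → Fin k → ℝ
  hv0L2 : ∀ i, MemLp (fun x => v0 x i) 2 (volume.restrict Ω)
  hv0grad : ∀ i, MemLp (fun x => gradient (fun y => v0 y i) x) 2 (volume.restrict Ω)
  hv0bdd : ∀ᵐ x ∂(volume.restrict Ω), ∀ i, v0 x i ∈ Set.Icc (0:ℝ) 1
  hv0seg : ∀ᵐ x ∂(volume.restrict Ω), ∀ i j, i ≠ j → v0 x i * v0 x j = 0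

variable {N k : ℕ}

/-- `f_i := F_i'`. -/
def fder (S : Setting N k) (i : Fin k) (s : ℝ) : ℝ := deriv (S.Fc i) s

/-- The functional `F_{ε,β}`. -/
def Feb (S : Setting N k) (ε β : ℝ) (v : Pt N → ℝ → Fin k → ℝ) : ℝ :=
  ∫ t in Set.Ioi (0:ℝ), ∫ x in S.Ω,
    (Real.exp (-t/ε) / ε) *
      (ε * ∑ i, (tder v i x t)^2 + ∑ i, ‖sgrad v i x t‖^2
        - 2 * ∑ i, S.Fc i (v x t i)
        + (β/2) * ∑ i, ∑ j, S.A i j * (v x t i)^2 * (v x t j)^2)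

/-- The rescaled functional `J_{ε,β}`. -/
def Jeb (S : Setting N k) (ε β : ℝ) (u : Pt N → ℝ → Fin k → ℝ) : ℝ :=
  ∫ t in Set.Ioi (0:ℝ), ∫ x in S.Ω,
    Real.exp (-t) *
      (∑ i, (tder u i x t)^2
        + ε * (∑ i, ‖sgrad u i x t‖^2 - 2 * ∑ i, S.Fc i (u x t i)
          + (β/2) * ∑ i, ∑ j, S.A i j * (u x t i)^2 * (u x t j)^2))

/-- Initial condition `v(·,0) = v₀` a.e. in `Ω`. -/
def initCond (S : Setting N k) (v : Pt N → ℝ → Fin k → ℝ) : Prop :=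
  ∀ᵐ x ∂(volume.restrict S.Ω), v x 0 = S.v0 x

/-- Boundary condition `v(·,t) = g₀` on `∂Ω` for a.e. `t > 0` (where `g₀` is the trace
of `v₀` on `∂Ω`). -/
def bdryCond (S : Setting N k) (v : Pt N → ℝ → Fin k → ℝ) : Prop :=
  ∀ᵐ t ∂(volume.restrict (Set.Ioi (0:ℝ))), ∀ x ∈ frontier S.Ω, v x t = S.v0 x

/-- The set `U_{v₀,g₀}`. -/
def Uboth (S : Setting N k) : Set (Pt N → ℝ → Fin k → ℝ) :=
  {v | memU S.Ω v ∧ initCond S v ∧ bdryCond S v}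

/-- The set `U_{v₀}`. -/
def Uinit (S : Setting N k) : Set (Pt N → ℝ → Fin k → ℝ) :=
  {v | memU S.Ω v ∧ initCond S v}

/-- The set `U_{g₀}`. -/
def Ubdry (S : Setting N k) : Set (Pt N → ℝ → Fin k → ℝ) :=
  {v | memU S.Ω v ∧ bdryCond S v}

/-- `v` has segregated components: `v_i · v_j = 0` a.e. in `Ω × (0,∞)` for `i ≠ j`. -/
def segregated (S : Setting N k) (v : Pt N → ℝ → Fin k → ℝ) : Prop :=
  ∀ᵐ p ∂(μI S.Ω), ∀ i j, i ≠ j → v p.1 p.2 i * v p.1 p.2 j = 0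

/-- The set `U_seg` of segregated configurations inside `U₀`. -/
def Useg (S : Setting N k) (U0 : Set (Pt N → ℝ → Fin k → ℝ)) :
    Set (Pt N → ℝ → Fin k → ℝ) :=
  {v ∈ U0 | segregated S v}

/-- `I(t) = ∫_Ω |∂_t u|² dx`. -/
def Ifun (S : Setting N k) (u : Pt N → ℝ → Fin k → ℝ) (t : ℝ) : ℝ :=
  ∫ x in S.Ω, ∑ i, (tder u i x t)^2

/-- `R(t) = ε ∫_Ω { |∇u|² − 2F(u) + (β/2)⟨u²,Au²⟩ } dx`. -/
def Rfun (S : Setting N k) (ε β : ℝ) (u : Pt N → ℝ → Fin k → ℝ) (t : ℝ) : ℝ :=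
  ε * ∫ x in S.Ω, (∑ i, ‖sgrad u i x t‖^2 - 2 * ∑ i, S.Fc i (u x t i)
    + (β/2) * ∑ i, ∑ j, S.A i j * (u x t i)^2 * (u x t j)^2)

/-- The energy function `E(t) = e^t ∫_t^∞ e^{−τ}(I(τ)+R(τ)) dτ`. -/
def Efun (S : Setting N k) (ε β : ℝ) (u : Pt N → ℝ → Fin k → ℝ) (t : ℝ) : ℝ :=
  Real.exp t * ∫ τ in Set.Ioi t, Real.exp (-τ) * (Ifun S u τ + Rfun S ε β u τ)

/-- Squared `H¹(Ω×(0,T))^k` distance between `v` and `w`. -/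
def H1diff {N k : ℕ} (Ω : Set (Pt N)) (T : ℝ) (v w : Pt N → ℝ → Fin k → ℝ) : ℝ :=
  ∫ p, (∑ i, ((v p.1 p.2 i - w p.1 p.2 i)^2
    + (tder v i p.1 p.2 - tder w i p.1 p.2)^2
    + ‖sgrad v i p.1 p.2 - sgrad w i p.1 p.2‖^2)) ∂(μT Ω T)

/-- Strong convergence in `U`: convergence in `H¹(Ω×(0,T))^k` for every `T > 0`. -/
def strongU {N k : ℕ} (Ω : Set (Pt N)) (vn : ℕ → (Pt N → ℝ → Fin k → ℝ))
    (v : Pt N → ℝ → Fin k → ℝ) : Prop :=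
  ∀ T > 0, Tendsto (fun n => H1diff Ω T (vn n) v) atTop (nhds 0)

/-- Weak convergence in `U`: for every `T > 0`, the functions, their time derivatives and
their spatial gradients converge weakly in `L²(Ω×(0,T))`. -/
def weakU {N k : ℕ} (Ω : Set (Pt N)) (vn : ℕ → (Pt N → ℝ → Fin k → ℝ))
    (v : Pt N → ℝ → Fin k → ℝ) : Prop :=
  ∀ T > 0, ∀ i : Fin k,
    (∀ g : Pt N × ℝ → ℝ, MemLp g 2 (μT Ω T) →
      Tendsto (fun n => ∫ p, vn n p.1 p.2 i * g p ∂(μT Ω T)) atTop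
        (nhds (∫ p, v p.1 p.2 i * g p ∂(μT Ω T))) ∧
      Tendsto (fun n => ∫ p, tder (vn n) i p.1 p.2 * g p ∂(μT Ω T)) atTop
        (nhds (∫ p, tder v i p.1 p.2 * g p ∂(μT Ω T)))) ∧
    (∀ G : Pt N × ℝ → Pt N, MemLp G 2 (μT Ω T) →
      Tendsto (fun n => ∫ p, ⟪sgrad (vn n) i p.1 p.2, G p⟫ ∂(μT Ω T)) atTop
        (nhds (∫ p, ⟪sgrad v i p.1 p.2, G p⟫ ∂(μT Ω T))))

/-- Pointwise a.e. convergence in `Ω × (0,∞)`. -/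
def aeConv {N k : ℕ} (Ω : Set (Pt N)) (vn : ℕ → (Pt N → ℝ → Fin k → ℝ))
    (v : Pt N → ℝ → Fin k → ℝ) : Prop :=
  ∀ᵐ p ∂(μI Ω), Tendsto (fun n => vn n p.1 p.2) atTop (nhds (v p.1 p.2))

/-- `‖v‖_{L^∞(Ω×(0,∞))^k} ≤ C`. -/
def aeBdd {N k : ℕ} (Ω : Set (Pt N)) (v : Pt N → ℝ → Fin k → ℝ) (C : ℝ) : Prop :=
  ∀ᵐ p ∂(μI Ω), ∀ i, |v p.1 p.2 i| ≤ C

/-- The interaction integral `∫_0^T ∫_Ω ⟨v²,Av²⟩ dx dt`. -/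
def interQ (S : Setting N k) (v : Pt N → ℝ → Fin k → ℝ) (T : ℝ) : ℝ :=
  ∫ t in Set.Ioo (0:ℝ) T, ∫ x in S.Ω, ∑ i, ∑ j, S.A i j * (v x t i)^2 * (v x t j)^2

/-- `v̂_i = v_i − Σ_{j≠i} v_j`. -/
def vhat {N k : ℕ} (v : Pt N → ℝ → Fin k → ℝ) (i : Fin k) (x : Pt N) (t : ℝ) : ℝ :=
  v x t i - ∑ j ∈ Finset.univ.erase i, v x t j

/-- `f̂_i = f_i(v_i) − Σ_{j≠i} f_j(v_j)`. -/
def fhat (S : Setting N k) (v : Pt N → ℝ → Fin k → ℝ) (i : Fin k) (x : Pt N) (t : ℝ) : ℝ :=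
  fder S i (v x t i) - ∑ j ∈ Finset.univ.erase i, fder S j (v x t j)

/-- Membership in `H¹(Ω)^k` for a time-independent function. -/
def memH1 {N k : ℕ} (Ω : Set (Pt N)) (w : Pt N → Fin k → ℝ) : Prop :=
  ∀ i : Fin k, MemLp (fun x => w x i) 2 (volume.restrict Ω) ∧
    MemLp (fun x => gradient (fun y => w y i) x) 2 (volume.restrict Ω)

/-- The elliptic energy `E_β`. -/
def Eell (S : Setting N k) (β : ℝ) (w : Pt N → Fin k → ℝ) : ℝ :=
  ∫ x in S.Ω, (∑ i, ‖gradient (fun y => w y i) x‖^2 - 2 * ∑ i, S.Fc i (w x i)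
    + (β/2) * ∑ i, ∑ j, S.A i j * (w x i)^2 * (w x j)^2)

/-- `w = g₀` on `∂Ω` (where `g₀` is the trace of `v₀`). -/
def bdryEq (S : Setting N k) (w : Pt N → Fin k → ℝ) : Prop :=
  ∀ x ∈ frontier S.Ω, w x = S.v0 x

/-- `u` solves the elliptic minimization problem `min{E_β(w) : w ∈ H¹(Ω)^k, w = g₀ on ∂Ω}`. -/
def solvesEll (S : Setting N k) (β : ℝ) (u : Pt N → Fin k → ℝ) : Prop :=
  memH1 S.Ω u ∧ bdryEq S u ∧
    ∀ w, memH1 S.Ω w → bdryEq S w → Eell S β u ≤ Eell S β w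

/-- Weak convergence in `H¹(Ω)^k`. -/
def weakH1 {N k : ℕ} (Ω : Set (Pt N)) (wn : ℕ → (Pt N → Fin k → ℝ))
    (w : Pt N → Fin k → ℝ) : Prop :=
  ∀ i : Fin k,
    (∀ g : Pt N → ℝ, MemLp g 2 (volume.restrict Ω) →
      Tendsto (fun n => ∫ x in Ω, wn n x i * g x) atTop (nhds (∫ x in Ω, w x i * g x))) ∧
    (∀ G : Pt N → Pt N, MemLp G 2 (volume.restrict Ω) →
      Tendsto (fun n => ∫ x in Ω, ⟪gradient (fun y => wn n y i) x, G x⟫) atTop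
        (nhds (∫ x in Ω, ⟪gradient (fun y => w y i) x, G x⟫)))

/-!
Compare a minimizer `u` with the time-independent extension of `v₀`, which is admissible for
both boundary conditions. Its time derivative vanishes and, `v₀` being segregated, so does its
interaction term, hence `J_{ε,β}(u) ≤ J_{ε,β}(v₀) = ε (∫_Ω |∇v₀|² − 2F(v₀))` for every `β`.
Conversely, the monotonicity of `F_i` outside `[0,1]` makes each `F_i` bounded above, so the
integrand of `J_{ε,β}` is at least `−2ε e^{−t} sup F` and `J_{ε,β}(u) ≥ −2ε |Ω| sup F`.
-/

section PotentialBound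

variable {α β : Type*} [LinearOrder α] [TopologicalSpace α] [OrderTopology α] [DenselyOrdered α]
  [LinearOrder β] [TopologicalSpace β] [OrderClosedTopology β] {f : α → β} {a b s : α}

lemma Continuous.le_of_monotoneOn_Iio (hf : Continuous f) (hmono : MonotoneOn f (Iio a))
    (hs : s < a) : f s ≤ f a :=
  have hsub : Ioo s a ⊆ {t | f s ≤ f t} := fun _ ht => hmono hs ht.2 ht.1.le
  (isClosed_le continuous_const hf).closure_subset_iff.2 hsub
    ((closure_Ioo hs.ne).symm ▸ right_mem_Icc.2 hs.le)

lemma Continuous.le_of_antitoneOn_Ioi (hf : Continuous f) (hanti : AntitoneOn f (Ioi b))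
    (hs : b < s) : f s ≤ f b :=
  have hsub : Ioo b s ⊆ {t | f s ≤ f t} := fun _ ht => hanti ht.1 hs ht.2.le
  (isClosed_le continuous_const hf).closure_subset_iff.2 hsub
    ((closure_Ioo hs.ne).symm ▸ left_mem_Icc.2 hs.le)

lemma Continuous.bddAbove_range_of_monotoneOn_Iio_of_antitoneOn_Ioi [CompactIccSpace α]
    (hf : Continuous f) (hmono : MonotoneOn f (Iio a)) (hanti : AntitoneOn f (Ioi b)) :
    BddAbove (range f) := by
  have : Nonempty β := ⟨f a⟩
  obtain ⟨M, hM⟩ := (isCompact_Icc (a := a) (b := b)).bddAbove_image hf.continuousOn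
  refine ⟨max M (max (f a) (f b)), forall_mem_range.2 fun s => ?_⟩
  rcases lt_or_ge s a with hsa | hsa
  · exact (hf.le_of_monotoneOn_Iio hmono hsa).trans (by simp)
  rcases le_or_gt s b with hsb | hsb
  · exact (hM (mem_image_of_mem f ⟨hsa, hsb⟩)).trans (le_max_left _ _)
  · exact (hf.le_of_antitoneOn_Ioi hanti hsb).trans (by simp)

end PotentialBound

-- `f` need not be integrable: if it is not, `∫ f = 0` by convention.
lemma integral_le_integral_of_le_of_integral_nonpos {α : Type*} [MeasurableSpace α]
    {μ : Measure α} {f g : α → ℝ} (hg : Integrable g μ) (hgf : g ≤ f)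
    (hg0 : ∫ x, g x ∂μ ≤ 0) : ∫ x, g x ∂μ ≤ ∫ x, f x ∂μ := by
  by_cases hf : Integrable f μ
  · exact integral_mono hg hf hgf
  · rwa [integral_undef hf]

section Interaction

variable {ι : Type*} [Fintype ι] {A : ι → ι → ℝ} {v : ι → ℝ}

lemma interaction_nonneg (hA : ∀ i j, 0 ≤ A i j) :
    0 ≤ ∑ i, ∑ j, A i j * v i ^ 2 * v j ^ 2 :=
  Finset.sum_nonneg fun i _ => Finset.sum_nonneg fun j _ => by
    have := hA i j
    positivity

lemma interaction_eq_zero_of_segregated (hA : ∀ i, A i i = 0)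
    (hv : ∀ i j, i ≠ j → v i * v j = 0) : ∑ i, ∑ j, A i j * v i ^ 2 * v j ^ 2 = 0 :=
  Finset.sum_eq_zero fun i _ => Finset.sum_eq_zero fun j _ => by
    rcases eq_or_ne i j with rfl | hij
    · simp [hA]
    · rw [mul_assoc, ← mul_pow, hv i j hij]
      ring

end Interaction

namespace Setting

variable {N k : ℕ} (S : Setting N k)

lemma A_nonneg (i j : Fin k) : 0 ≤ S.A i j := by
  rcases eq_or_ne i j with rfl | hij
  · exact (S.hAdiag i).ge
  · exact (S.hAoff i j hij).le

lemma exists_sum_Fc_le : ∃ c, 0 ≤ c ∧ ∀ s : Fin k → ℝ, ∑ i, S.Fc i (s i) ≤ c := by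
  choose M hM using fun i => (S.hFcont i).bddAbove_range_of_monotoneOn_Iio_of_antitoneOn_Ioi
    (S.hFnondec i) (S.hFnoninc i)
  exact ⟨max (∑ i, M i) 0, le_max_right _ _, fun s =>
    (Finset.sum_le_sum fun i _ => hM i (mem_range_self (s i))).trans (le_max_left _ _)⟩

def static : Pt N → ℝ → Fin k → ℝ := fun x _ => S.v0 x

lemma memU_static : memU S.Ω S.static := by
  intro T _ i
  have hfin : volume.restrict (Ioo (0:ℝ) T) univ ≠ ⊤ := by simp [Real.volume_Ioo]
  have lift {E : Type} [NormedAddCommGroup E] {g : Pt N → E}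
      (hg : MemLp g 2 (volume.restrict S.Ω)) : MemLp (fun p : Pt N × ℝ => g p.1) 2 (μT S.Ω T) := by
    have h := hg.smul_measure hfin
    rw [← Measure.map_fst_prod] at h
    exact h.comp_of_map measurable_fst.aemeasurable
  refine ⟨lift (S.hv0L2 i), ?_, lift (S.hv0grad i)⟩
  simp [tder, static]

lemma static_mem_Uboth : S.static ∈ Uboth S :=
  ⟨S.memU_static, .of_forall fun _ => rfl, .of_forall fun _ _ _ => rfl⟩

lemma static_mem_Uinit : S.static ∈ Uinit S :=
  ⟨S.memU_static, .of_forall fun _ => rfl⟩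

def staticEnergy : ℝ :=
  ∫ x in S.Ω, (∑ i, ‖gradient (fun y => S.v0 y i) x‖ ^ 2 - 2 * ∑ i, S.Fc i (S.v0 x i))

def jebIntegrand (ε β : ℝ) (u : Pt N → ℝ → Fin k → ℝ) (x : Pt N) (t : ℝ) : ℝ :=
  rexp (-t) * (∑ i, tder u i x t ^ 2 + ε * (∑ i, ‖sgrad u i x t‖ ^ 2
    - 2 * ∑ i, S.Fc i (u x t i) + β / 2 * ∑ i, ∑ j, S.A i j * u x t i ^ 2 * u x t j ^ 2))

lemma Jeb_eq_integral_jebIntegrand (ε β : ℝ) (u : Pt N → ℝ → Fin k → ℝ) :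
    Jeb S ε β u = ∫ t in Ioi 0, ∫ x in S.Ω, S.jebIntegrand ε β u x t :=
  rfl

lemma Jeb_static (ε β : ℝ) : Jeb S ε β S.static = ε * S.staticEnergy := by
  have inner (t : ℝ) :
      ∫ x in S.Ω, S.jebIntegrand ε β S.static x t = rexp (-t) * (ε * S.staticEnergy) := by
    rw [staticEnergy, ← integral_const_mul, ← integral_const_mul]
    refine integral_congr_ae ?_
    filter_upwards [S.hv0seg] with x hx
    simp only [jebIntegrand, static, tder, sgrad, deriv_const', ne_eq, OfNat.ofNat_ne_zero,
      not_false_eq_true, zero_pow, Finset.sum_const_zero,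
      interaction_eq_zero_of_segregated S.hAdiag hx]
    ring
  simp only [Jeb_eq_integral_jebIntegrand, inner, integral_mul_const, integral_exp_neg_Ioi_zero,
    one_mul]

lemma exp_neg_mul_le_jebIntegrand {ε β c : ℝ} (hε : 0 ≤ ε) (hβ : 0 ≤ β)
    (hF : ∀ s : Fin k → ℝ, ∑ i, S.Fc i (s i) ≤ c) (u : Pt N → ℝ → Fin k → ℝ) (x : Pt N)
    (t : ℝ) : rexp (-t) * -(ε * (2 * c)) ≤ S.jebIntegrand ε β u x t := by
  have hI : 0 ≤ ∑ i, ∑ j, S.A i j * u x t i ^ 2 * u x t j ^ 2 :=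
    interaction_nonneg S.A_nonneg
  have hdt : 0 ≤ ∑ i, tder u i x t ^ 2 := by positivity
  have hdx : 0 ≤ ∑ i, ‖sgrad u i x t‖ ^ 2 := by positivity
  have := hF (u x t)
  unfold jebIntegrand
  gcongr
  nlinarith [mul_nonneg hβ hI]

lemma neg_le_Jeb {ε β c : ℝ} (hε : 0 ≤ ε) (hβ : 0 ≤ β) (hc : 0 ≤ c)
    (hF : ∀ s : Fin k → ℝ, ∑ i, S.Fc i (s i) ≤ c) (u : Pt N → ℝ → Fin k → ℝ) :
    -(ε * (2 * c * volume.real S.Ω)) ≤ Jeb S ε β u := by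
  have : IsFiniteMeasure (volume.restrict S.Ω) :=
    isFiniteMeasure_restrict.2 S.hΩbdd.measure_lt_top.ne
  have hK : 0 ≤ ε * (2 * c * volume.real S.Ω) := by positivity
  have inner (t : ℝ) : rexp (-t) * -(ε * (2 * c * volume.real S.Ω)) ≤
      ∫ x in S.Ω, S.jebIntegrand ε β u x t := by
    have hconst : ∫ _ in S.Ω, rexp (-t) * -(ε * (2 * c)) =
        rexp (-t) * -(ε * (2 * c * volume.real S.Ω)) := by
      rw [setIntegral_const, smul_eq_mul]
      ring
    have hle := integral_le_integral_of_le_of_integral_nonpos (integrable_const _)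
      (S.exp_neg_mul_le_jebIntegrand hε hβ hF u · t)
      (hconst ▸ mul_nonpos_of_nonneg_of_nonpos (exp_pos _).le (neg_nonpos.2 hK))
    rwa [hconst] at hle
  have hweight : ∫ t in Ioi 0, rexp (-t) * -(ε * (2 * c * volume.real S.Ω)) =
      -(ε * (2 * c * volume.real S.Ω)) := by
    rw [integral_mul_const, integral_exp_neg_Ioi_zero, one_mul]
  have hle := integral_le_integral_of_le_of_integral_nonpos
    ((integrableOn_exp_neg_Ioi 0).mul_const _) inner (by rw [hweight]; exact neg_nonpos.2 hK)
  rwa [hweight] at hle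

end Setting

/-- Lemma 4.1, level estimate: for `U₀` either `U_{v₀,g₀}` or `U_{v₀}`,
there is a constant `C` (independent of `ε ∈ (0,1)` and `β > 0`) such that every minimizer
`u` of `J_{ε,β}` on `U₀` satisfies `|J_{ε,β}(u)| ≤ C ε`. -/
theorem stmt_2 {N k : ℕ} (S : Setting N k)
    (U0 : Set (Pt N → ℝ → Fin k → ℝ))
    (hU0 : U0 = Uboth S ∨ U0 = Uinit S) :
    ∃ C : ℝ, ∀ ε ∈ Set.Ioo (0:ℝ) 1, ∀ β > (0:ℝ), ∀ u ∈ U0,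
      (∀ w ∈ U0, Jeb S ε β u ≤ Jeb S ε β w) → |Jeb S ε β u| ≤ C * ε := by
  obtain ⟨c, hc, hF⟩ := S.exists_sum_Fc_le
  have hstatic : S.static ∈ U0 := by
    rcases hU0 with rfl | rfl
    exacts [S.static_mem_Uboth, S.static_mem_Uinit]
  refine ⟨max S.staticEnergy (2 * c * volume.real S.Ω), fun ε hε β hβ u _ hmin => abs_le.2 ⟨?_, ?_⟩⟩
  · calc -(max S.staticEnergy (2 * c * volume.real S.Ω) * ε)
        ≤ -(ε * (2 * c * volume.real S.Ω)) := by
          rw [mul_comm]; gcongr; exacts [hε.1.le, le_max_right _ _]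
      _ ≤ Jeb S ε β u := S.neg_le_Jeb hε.1.le hβ.le hc hF u
  · calc Jeb S ε β u ≤ Jeb S ε β S.static := hmin _ hstatic
      _ = ε * S.staticEnergy := S.Jeb_static ε β
      _ ≤ max S.staticEnergy (2 * c * volume.real S.Ω) * ε := by
          rw [mul_comm]; gcongr; exacts [hε.1.le, le_max_left _ _]
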